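/- arXiv:2504.01837 — 2 statements merged into one kernel-verified Lean document; each statement's English description precedes it below -/
import Mathlib

section
/- Let α > 1 and set a = (∫_{−π/2}^{π/2} (cos x)^(2/(α−1)) dx)^(−1). Define p(x) = a·(cos x)^(2/(α−1)) for x ∈ [−π/2, π/2] and p(x) = 0 otherwise. Then p is a probability density on ℝ and it achieves equality in the one-dimensional Rényi-entropic isoperimetric inequality: N_α(p) · I_α(p) = (2π/(α−1)) · (2α/(α+1))^((α+1)/(α−1)) · (Γ((α+1)/(2(α−1))) / Γ(α/(α−1)))². -/
open MeasureTheory Real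

/-- The Rényi entropy power of order `α` of a density `p` on `ℝ`. -/
noncomputable def renyiEntropyPower (α : ℝ) (p : ℝ → ℝ) : ℝ :=
  (∫ x, p x ^ α) ^ (-2 / (α - 1))

/-- The Rényi–Fisher information of order `α` of a density `p` on `ℝ`. -/
noncomputable def renyiFisherInfo (α : ℝ) (p : ℝ → ℝ) : ℝ :=
  α * (∫ x in {x | 0 < p x}, deriv p x ^ 2 * p x ^ (α - 2)) / (∫ x, p x ^ α)

/-!
Put `c = 2 / (α - 1)`, so that `c * α = c + 2`. For `p = a * cos ^ c` on `(-π/2, π/2)`, both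
`∫ p ^ α` and the Fisher integrand `p' ^ 2 * p ^ (α - 2) = a ^ α c ^ 2 cos ^ c * sin ^ 2` are
expressed through `W s = ∫ cos ^ s` at `s = c` and `s = c + 2`. The substitution `u = sin² θ`
turns `W s` into the Beta integral `B(1/2, (s + 1)/2)`, whence
`W s = √π Γ((s + 1)/2) / Γ(s/2 + 1)` and `W (s + 2) = (s + 1)/(s + 2) * W s`; with these the
product `N_α · I_α` collapses to `W c ^ 2` times an explicit function of `c`, and `W c` is the
Gamma quotient on the right-hand side.
-/

open Set

lemma Complex.betaIntegral_ofReal (u v : ℝ) :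
    Complex.betaIntegral u v = ↑(∫ x in (0 : ℝ)..1, x ^ (u - 1) * (1 - x) ^ (v - 1)) := by
  rw [Complex.betaIntegral, ← intervalIntegral.integral_ofReal]
  refine intervalIntegral.integral_congr_ae (ae_of_all _ fun x hx => ?_)
  rw [uIoc_of_le zero_le_one] at hx
  push_cast [Complex.ofReal_cpow hx.1.le, Complex.ofReal_cpow (sub_nonneg.2 hx.2)]
  rfl

lemma Real.Gamma_mul_Gamma_eq_integral {u v : ℝ} (hu : 0 < u) (hv : 0 < v) :
    Gamma u * Gamma v =
      Gamma (u + v) * ∫ x in (0 : ℝ)..1, x ^ (u - 1) * (1 - x) ^ (v - 1) := by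
  have h := Complex.Gamma_mul_Gamma_eq_betaIntegral (s := u) (t := v) (by simpa) (by simpa)
  rw [Complex.betaIntegral_ofReal, ← Complex.ofReal_add] at h
  simpa only [Complex.Gamma_ofReal, ← Complex.ofReal_mul, Complex.ofReal_inj] using h

lemma beta_integrand_sin_sq_mul_deriv {s θ : ℝ} (hs : 0 < s) (hθ : θ ∈ Ioc 0 (π / 2)) :
    (sin θ ^ 2) ^ ((1 : ℝ) / 2 - 1) * (1 - sin θ ^ 2) ^ ((s + 1) / 2 - 1) *
      (2 * sin θ * cos θ) = 2 * cos θ ^ s := by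
  have hsin : 0 < sin θ := sin_pos_of_pos_of_lt_pi hθ.1 (by linarith [hθ.2, pi_pos])
  have hcos : 0 ≤ cos θ := cos_nonneg_of_mem_Icc ⟨by linarith [hθ.1, pi_pos], hθ.2⟩
  have hsin_sq : (sin θ ^ 2) ^ ((1 : ℝ) / 2 - 1) = (sin θ)⁻¹ := by
    rw [← rpow_natCast, ← rpow_mul hsin.le]
    norm_num [rpow_neg_one]
  have hcos_sq : (1 - sin θ ^ 2) ^ ((s + 1) / 2 - 1) = cos θ ^ (s - 1) := by
    rw [← cos_sq', ← rpow_natCast, ← rpow_mul hcos]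
    ring_nf
  have hcos_pow : cos θ ^ s = cos θ ^ (s - 1) * cos θ := by
    conv_lhs => rw [show s = (s - 1) + 1 by ring]
    rw [rpow_add' hcos (by simpa using hs.ne'), rpow_one]
  rw [hsin_sq, hcos_sq, hcos_pow]
  field_simp

lemma integral_beta_one_half_eq_two_mul_integral_cos_rpow {s : ℝ} (hs : 0 < s) :
    ∫ x in (0 : ℝ)..1, x ^ ((1 : ℝ) / 2 - 1) * (1 - x) ^ ((s + 1) / 2 - 1) =
      2 * ∫ x in (0 : ℝ)..π / 2, cos x ^ s := by
  have hsubst := intervalIntegral.integral_comp_mul_deriv_of_deriv_nonneg (a := 0) (b := π / 2)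
    (f := fun θ => sin θ ^ 2) (f' := fun θ => 2 * sin θ * cos θ)
    (g := fun x => x ^ ((1 : ℝ) / 2 - 1) * (1 - x) ^ ((s + 1) / 2 - 1))
    (by fun_prop) (fun θ _ => by simpa using (hasDerivAt_sin θ).fun_pow 2)
    (fun θ hθ => ?_)
  swap
  · rw [min_eq_left (by positivity), max_eq_right (by positivity)] at hθ
    have := sin_pos_of_pos_of_lt_pi hθ.1 (by linarith [hθ.2, pi_pos])
    have := cos_pos_of_mem_Ioo ⟨by linarith [hθ.1, pi_pos], hθ.2⟩
    positivity
  simp only [sin_zero, sin_pi_div_two, zero_pow two_ne_zero, one_pow] at hsubst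
  rw [← hsubst, ← intervalIntegral.integral_const_mul]
  refine intervalIntegral.integral_congr_ae (ae_of_all _ fun θ hθ => ?_)
  rw [uIoc_of_le (by positivity)] at hθ
  exact beta_integrand_sin_sq_mul_deriv hs hθ

noncomputable def cosRpowIntegral (s : ℝ) : ℝ :=
  ∫ x in Icc (-(π / 2)) (π / 2), cos x ^ s

lemma continuous_cos_rpow {s : ℝ} (hs : 0 ≤ s) : Continuous fun x => cos x ^ s :=
  (continuous_rpow_const hs).comp continuous_cos

lemma cosRpowIntegral_eq_two_mul {s : ℝ} (hs : 0 ≤ s) :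
    cosRpowIntegral s = 2 * ∫ x in (0 : ℝ)..π / 2, cos x ^ s := by
  have hint := (continuous_cos_rpow hs).intervalIntegrable (μ := volume)
  have hneg : ∫ x in -(π / 2)..0, cos x ^ s = ∫ x in (0 : ℝ)..π / 2, cos x ^ s := by
    simpa using (intervalIntegral.integral_comp_neg (a := 0) (b := π / 2) fun x => cos x ^ s).symm
  rw [cosRpowIntegral, integral_Icc_eq_integral_Ioc,
    ← intervalIntegral.integral_of_le (by linarith [pi_pos]),
    ← intervalIntegral.integral_add_adjacent_intervals (hint _ 0) (hint 0 _), hneg, two_mul]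

lemma cosRpowIntegral_eq_Gamma {s : ℝ} (hs : 0 < s) :
    cosRpowIntegral s = √π * Gamma ((s + 1) / 2) / Gamma (s / 2 + 1) := by
  have h := Gamma_mul_Gamma_eq_integral (u := 1 / 2) (v := (s + 1) / 2) (by norm_num)
    (by positivity)
  rw [integral_beta_one_half_eq_two_mul_integral_cos_rpow hs, Gamma_one_half_eq,
    ← cosRpowIntegral_eq_two_mul hs.le, show 1 / 2 + (s + 1) / 2 = s / 2 + 1 by ring] at h
  rw [eq_div_iff (Gamma_pos_of_pos (by positivity)).ne', h, mul_comm]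

lemma cosRpowIntegral_pos {s : ℝ} (hs : 0 < s) : 0 < cosRpowIntegral s := by
  have := Gamma_pos_of_pos (show 0 < (s + 1) / 2 by positivity)
  have := Gamma_pos_of_pos (show 0 < s / 2 + 1 by positivity)
  have := sqrt_pos.2 pi_pos
  rw [cosRpowIntegral_eq_Gamma hs]
  positivity

lemma cosRpowIntegral_add_two {s : ℝ} (hs : 0 < s) :
    cosRpowIntegral (s + 2) = (s + 1) / (s + 2) * cosRpowIntegral s := by
  rw [cosRpowIntegral_eq_Gamma hs, cosRpowIntegral_eq_Gamma (by positivity),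
    show (s + 2 + 1) / 2 = (s + 1) / 2 + 1 by ring,
    show (s + 2) / 2 + 1 = (s / 2 + 1) + 1 by ring,
    Gamma_add_one (by positivity), Gamma_add_one (by positivity)]
  have := Gamma_pos_of_pos (show 0 < s / 2 + 1 by positivity)
  field_simp

noncomputable def cosRpowBump (a c : ℝ) : ℝ → ℝ :=
  (Icc (-(π / 2)) (π / 2)).indicator fun x => a * cos x ^ c

section cosRpowBump

variable {a c : ℝ}

lemma cosRpowBump_nonneg (ha : 0 ≤ a) (x : ℝ) : 0 ≤ cosRpowBump a c x :=
  indicator_nonneg (fun _ hx => mul_nonneg ha (rpow_nonneg (cos_nonneg_of_mem_Icc hx) _)) x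

lemma integrable_cosRpowBump (hc : 0 ≤ c) : Integrable (cosRpowBump a c) :=
  ((continuous_const.mul (continuous_cos_rpow hc)).integrableOn_Icc).integrable_indicator
    measurableSet_Icc

lemma integral_cosRpowBump : ∫ x, cosRpowBump a c x = a * cosRpowIntegral c := by
  rw [cosRpowBump, integral_indicator measurableSet_Icc, integral_const_mul, cosRpowIntegral]

lemma cosRpowBump_rpow (ha : 0 ≤ a) {α : ℝ} (hα : α ≠ 0) :
    (fun x => cosRpowBump a c x ^ α) = cosRpowBump (a ^ α) (c * α) := by
  ext x
  by_cases hx : x ∈ Icc (-(π / 2)) (π / 2)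
  · have hcos := cos_nonneg_of_mem_Icc hx
    simp only [cosRpowBump, indicator_of_mem hx]
    rw [mul_rpow ha (rpow_nonneg hcos _), rpow_mul hcos]
  · simp only [cosRpowBump, indicator_of_notMem hx, zero_rpow hα]

lemma setOf_cosRpowBump_pos (ha : 0 < a) (hc : 0 < c) :
    {x | 0 < cosRpowBump a c x} = Ioo (-(π / 2)) (π / 2) := by
  ext x
  refine ⟨fun hpos => ?_, fun hx => ?_⟩
  · have hIcc : x ∈ Icc (-(π / 2)) (π / 2) := by
      by_contra hx
      simp [cosRpowBump, indicator_of_notMem hx] at hpos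
    rw [mem_ofPred, cosRpowBump, indicator_of_mem hIcc] at hpos
    refine ⟨lt_of_le_of_ne hIcc.1 ?_, lt_of_le_of_ne hIcc.2 ?_⟩ <;> rintro rfl <;>
      simp [zero_rpow hc.ne'] at hpos
  · rw [mem_ofPred, cosRpowBump, indicator_of_mem (Ioo_subset_Icc_self hx)]
    exact mul_pos ha (rpow_pos_of_pos (cos_pos_of_mem_Ioo hx) _)

lemma hasDerivAt_cosRpowBump {x : ℝ} (hx : x ∈ Ioo (-(π / 2)) (π / 2)) :
    HasDerivAt (cosRpowBump a c) (-(a * c * cos x ^ (c - 1) * sin x)) x := by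
  have hbump : cosRpowBump a c =ᶠ[nhds x] fun y => a * cos y ^ c :=
    Filter.eventually_of_mem (Icc_mem_nhds hx.1 hx.2) fun y hy => indicator_of_mem hy _
  refine HasDerivAt.congr_of_eventuallyEq ?_ hbump
  exact (((hasDerivAt_cos x).rpow_const (Or.inl (cos_pos_of_mem_Ioo hx).ne')).const_mul
    a).congr_deriv (by ring)

lemma deriv_cosRpowBump_sq_mul_rpow (ha : 0 < a) {α x : ℝ}
    (hx : x ∈ Ioo (-(π / 2)) (π / 2)) :
    deriv (cosRpowBump a c) x ^ 2 * cosRpowBump a c x ^ (α - 2) =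
      a ^ α * c ^ 2 * (cos x ^ (c * α - 2) - cos x ^ (c * α)) := by
  have hcos := cos_pos_of_mem_Ioo hx
  rw [(hasDerivAt_cosRpowBump hx).deriv, cosRpowBump, indicator_of_mem (Ioo_subset_Icc_self hx),
    mul_rpow ha.le (rpow_nonneg hcos.le _), ← rpow_mul hcos.le]
  have ha_pow : a ^ 2 * a ^ (α - 2) = a ^ α := by
    rw [← rpow_two, ← rpow_add ha]; ring_nf
  have hcos_pow : (cos x ^ (c - 1)) ^ 2 * cos x ^ (c * (α - 2)) = cos x ^ (c * α - 2) := by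
    rw [← rpow_two, ← rpow_mul hcos.le, ← rpow_add hcos]; ring_nf
  have hcos_sq : cos x ^ (c * α - 2) * cos x ^ 2 = cos x ^ (c * α) := by
    rw [← rpow_two, ← rpow_add hcos]; ring_nf
  calc (-(a * c * cos x ^ (c - 1) * sin x)) ^ 2 * (a ^ (α - 2) * cos x ^ (c * (α - 2)))
      = a ^ 2 * a ^ (α - 2) * c ^ 2 * ((cos x ^ (c - 1)) ^ 2 * cos x ^ (c * (α - 2))) *
          sin x ^ 2 := by
        ring
    _ = a ^ α * c ^ 2 * (cos x ^ (c * α - 2) - cos x ^ (c * α - 2) * cos x ^ 2) := by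
        rw [ha_pow, hcos_pow, sin_sq]; ring
    _ = _ := by rw [hcos_sq]

lemma integral_deriv_cosRpowBump_sq_mul_rpow (ha : 0 < a) (hc : 0 < c) {α : ℝ}
    (hcα : 2 ≤ c * α) :
    ∫ x in {x | 0 < cosRpowBump a c x},
        deriv (cosRpowBump a c) x ^ 2 * cosRpowBump a c x ^ (α - 2) =
      a ^ α * c ^ 2 * (cosRpowIntegral (c * α - 2) - cosRpowIntegral (c * α)) := by
  have hint {s : ℝ} (hs : 0 ≤ s) :
      IntegrableOn (fun x => cos x ^ s) (Ioo (-(π / 2)) (π / 2)) :=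
    (continuous_cos_rpow hs).integrableOn_Icc.mono_set Ioo_subset_Icc_self
  rw [setOf_cosRpowBump_pos ha hc, setIntegral_congr_fun measurableSet_Ioo
    fun x hx => deriv_cosRpowBump_sq_mul_rpow ha hx, integral_const_mul,
    integral_sub (hint (by linarith)) (hint (by linarith)), cosRpowIntegral, cosRpowIntegral,
    integral_Icc_eq_integral_Ioo, integral_Icc_eq_integral_Ioo]

lemma renyiFisherInfo_cosRpowBump (ha : 0 < a) (hc : 0 < c) {α : ℝ} (hcα : c * α = c + 2) :
    renyiFisherInfo α (cosRpowBump a c) = α * c ^ 2 / (c + 1) := by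
  have hα : α ≠ 0 := by rintro rfl; linarith
  have hW := cosRpowIntegral_pos hc
  have := rpow_pos_of_pos ha α
  rw [renyiFisherInfo, integral_deriv_cosRpowBump_sq_mul_rpow ha hc (by linarith),
    cosRpowBump_rpow ha.le hα, integral_cosRpowBump, hcα, add_sub_cancel_right,
    cosRpowIntegral_add_two hc]
  field_simp
  ring

lemma renyiEntropyPower_cosRpowBump (hc : 0 < c) {α : ℝ} (hcα : c * α = c + 2) :
    renyiEntropyPower α (cosRpowBump (cosRpowIntegral c)⁻¹ c) =
      cosRpowIntegral c ^ 2 * ((c + 2) / (c + 1)) ^ c := by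
  set W := cosRpowIntegral c
  have hW : 0 < W := cosRpowIntegral_pos hc
  have hα : α ≠ 0 := by rintro rfl; linarith
  have hexp : -2 / (α - 1) = -c := by
    have : α - 1 ≠ 0 := by rintro h; nlinarith
    field_simp
    linarith
  have hq : 0 < (c + 1) / (c + 2) := by positivity
  have hbase : W⁻¹ ^ α * ((c + 1) / (c + 2) * W) = (c + 1) / (c + 2) * W ^ (1 - α) := by
    rw [inv_rpow hW.le, rpow_sub hW, rpow_one]
    ring
  rw [renyiEntropyPower, cosRpowBump_rpow (inv_nonneg.2 hW.le) hα, integral_cosRpowBump, hcα,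
    cosRpowIntegral_add_two hc, hbase, hexp, mul_rpow hq.le (rpow_nonneg hW.le _),
    ← rpow_mul hW.le, show (1 - α) * -c = 2 by linarith, rpow_two, rpow_neg hq.le,
    ← inv_rpow hq.le, inv_div, mul_comm]

end cosRpowBump

theorem renyi_entropic_isoperimetric_dim1_alpha_gt_one_extremizer
    (α : ℝ) (hα : 1 < α) (a : ℝ)
    (ha : a = (∫ x in Set.Icc (-(π / 2)) (π / 2), Real.cos x ^ (2 / (α - 1)))⁻¹)
    (p : ℝ → ℝ)
    (hp : p = fun x =>
      if x ∈ Set.Icc (-(π / 2)) (π / 2) then a * Real.cos x ^ (2 / (α - 1)) else 0) :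
    (∀ x, 0 ≤ p x) ∧ Integrable p ∧ (∫ x, p x) = 1 ∧
      renyiEntropyPower α p * renyiFisherInfo α p =
        2 * π / (α - 1) * (2 * α / (α + 1)) ^ ((α + 1) / (α - 1)) *
          (Gamma ((α + 1) / (2 * (α - 1))) / Gamma (α / (α - 1))) ^ 2 := by
  obtain ⟨c, hc_def⟩ : ∃ c, 2 / (α - 1) = c := ⟨_, rfl⟩
  rw [hc_def] at ha hp
  have hα_sub : α - 1 ≠ 0 := by linarith
  have hα_add : α + 1 ≠ 0 := by linarith
  have hc : 0 < c := hc_def ▸ div_pos two_pos (by linarith)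
  have hcα : c * α = c + 2 := by rw [← hc_def]; field_simp; ring
  have hW := cosRpowIntegral_pos hc
  change a = (cosRpowIntegral c)⁻¹ at ha
  have hp_bump : p = cosRpowBump a c := by
    ext x
    rw [hp, cosRpowBump, indicator_apply]
  subst ha hp_bump
  refine ⟨cosRpowBump_nonneg (inv_nonneg.2 hW.le), integrable_cosRpowBump hc.le,
    by rw [integral_cosRpowBump, inv_mul_cancel₀ hW.ne'], ?_⟩
  have hGamma :
      Gamma ((α + 1) / (2 * (α - 1))) / Gamma (α / (α - 1)) = cosRpowIntegral c / √π := by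
    rw [cosRpowIntegral_eq_Gamma hc, ← hc_def]
    field_simp
    ring_nf
  rw [renyiEntropyPower_cosRpowBump hc hcα, renyiFisherInfo_cosRpowBump (inv_pos.2 hW) hc hcα,
    hGamma, show (α + 1) / (α - 1) = c + 1 by rw [← hc_def]; field_simp; ring,
    show 2 * α / (α + 1) = (c + 2) / (c + 1) by
      rw [div_eq_div_iff hα_add (by positivity)]; linear_combination hcα,
    show 2 * π / (α - 1) = π * c by rw [← hc_def]; ring,
    rpow_add_one (by positivity), div_pow, sq_sqrt pi_pos.le]
  field_simp
  linear_combination hcα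
end

section
/- For every α > 0 with α ≠ 1, one has 2π·α^(1/(α−1)) > r_{α,1}, where r_{α,1} = (2π/(α−1))·(2α/(α+1))^((α+1)/(α−1))·(Γ((α+1)/(2(α−1)))/Γ(α/(α−1)))² when α > 1, and r_{α,1} = (4πα/(1−α²))·((α+1)/(2α))^(2α/(1−α))·(Γ(α/(1−α))/Γ((α+1)/(2(1−α))))² when 0 < α < 1. -/
/-!
Substituting `β = 1 / (α - 1)` for `α > 1` and `γ = α / (1 - α)` for `α < 1` turns both sides
into products of powers `(1 + 1/y) ^ y` and a squared ratio of Gamma values. The Gamma ratio is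
controlled by the log-convexity of `s ↦ B(s, 1/2)` (Hölder's inequality on the Beta integral),
which gives `(Γ(s + 1/4) / Γ(s + 3/4))² ≤ 1 / s`. What remains are two elementary inequalities
comparing `(1 + 1/(2y + c)) ^ (2y + c)` with `(1 + 1/y) ^ y`, each proved by showing that the
difference of the logarithms is strictly decreasing on `(0, ∞)` with limit `0`.
-/

open Real Filter Set MeasureTheory ProbabilityTheory
open scoped Topology

lemma betaIntegrand_ofReal_re {a b x : ℝ} (hx : x ∈ Ioo 0 1) :
    ((x : ℂ) ^ ((a : ℂ) - 1) * (1 - (x : ℂ)) ^ ((b : ℂ) - 1)).re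
      = x ^ (a - 1) * (1 - x) ^ (b - 1) := by
  have h1 : (1 - (x : ℂ)) = ((1 - x : ℝ) : ℂ) := by push_cast; ring
  rw [h1, ← Complex.ofReal_one, ← Complex.ofReal_sub, ← Complex.ofReal_sub,
    ← Complex.ofReal_cpow hx.1.le, ← Complex.ofReal_cpow (sub_nonneg.2 hx.2.le),
    ← Complex.ofReal_mul, Complex.ofReal_re]

lemma integrableOn_betaIntegrand_complex {a b : ℝ} (ha : 0 < a) (hb : 0 < b) :
    IntegrableOn (fun x : ℝ => (x : ℂ) ^ ((a : ℂ) - 1) * (1 - (x : ℂ)) ^ ((b : ℂ) - 1))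
      (Ioo 0 1) :=
  (intervalIntegrable_iff_integrableOn_Ioo_of_le zero_le_one).mp
    (Complex.betaIntegral_convergent (by simpa) (by simpa))

lemma integrableOn_beta_integrand {a b : ℝ} (ha : 0 < a) (hb : 0 < b) :
    IntegrableOn (fun x : ℝ => x ^ (a - 1) * (1 - x) ^ (b - 1)) (Ioo 0 1) :=
  IntegrableOn.congr_fun (integrableOn_betaIntegrand_complex ha hb).re
    (fun _ hx => betaIntegrand_ofReal_re hx) measurableSet_Ioo

lemma beta_eq_integral {a b : ℝ} (ha : 0 < a) (hb : 0 < b) :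
    beta a b = ∫ x in Ioo 0 1, x ^ (a - 1) * (1 - x) ^ (b - 1) := by
  rw [beta_eq_betaIntegralReal a b ha hb, Complex.betaIntegral,
    intervalIntegral.integral_of_le zero_le_one, integral_Ioc_eq_integral_Ioo,
    ← RCLike.re_to_complex, ← integral_re (integrableOn_betaIntegrand_complex ha hb)]
  exact setIntegral_congr_fun measurableSet_Ioo fun _ hx => betaIntegrand_ofReal_re hx

theorem beta_mul_add_mul_le_rpow_beta_mul_rpow_beta {s t u a b : ℝ} (hs : 0 < s) (ht : 0 < t)
    (hu : 0 < u) (ha : 0 < a) (hb : 0 < b) (hab : a + b = 1) :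
    beta (a * s + b * t) u ≤ beta s u ^ a * beta t u ^ b := by
  let f : ℝ → ℝ → ℝ → ℝ := fun c v x => x ^ (c * (v - 1)) * (1 - x) ^ (c * (u - 1))
  have e : HolderConjugate (1 / a) (1 / b) := holderConjugate_one_div ha hb hab
  have f_nonneg : ∀ c v x, x ∈ Ioo (0 : ℝ) 1 → 0 ≤ f c v x := fun c v x hx =>
    mul_nonneg (rpow_nonneg hx.1.le _) (rpow_nonneg (sub_nonneg.2 hx.2.le) _)
  have f_rpow : ∀ {c : ℝ}, 0 < c → ∀ v x, x ∈ Ioo (0 : ℝ) 1 →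
      f c v x ^ (1 / c) = x ^ (v - 1) * (1 - x) ^ (u - 1) := by
    intro c hc v x hx
    rw [mul_rpow (rpow_nonneg hx.1.le _) (rpow_nonneg (sub_nonneg.2 hx.2.le) _),
      ← rpow_mul hx.1.le, ← rpow_mul (sub_nonneg.2 hx.2.le)]
    congr 2 <;> field
  have f_memLp : ∀ {c v : ℝ}, 0 < c → 0 < v →
      MemLp (f c v) (ENNReal.ofReal (1 / c)) (volume.restrict (Ioo 0 1)) := by
    intro c v hc hv
    have A : ENNReal.ofReal (1 / c) ≠ 0 := by
      rwa [Ne, ENNReal.ofReal_eq_zero, not_le, one_div_pos]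
    have B : ENNReal.ofReal (1 / c) ≠ ⊤ := ENNReal.ofReal_ne_top
    rw [← memLp_norm_rpow_iff _ A B, ENNReal.toReal_ofReal (one_div_nonneg.mpr hc.le),
      ENNReal.div_self A B, memLp_one_iff_integrable]
    · refine (integrableOn_beta_integrand hv hu).congr_fun (fun x hx => ?_) measurableSet_Ioo
      rw [norm_of_nonneg (f_nonneg c v x hx), f_rpow hc v x hx]
    · refine ContinuousOn.aestronglyMeasurable (fun x hx => ?_) measurableSet_Ioo
      have h1x : 1 - x ≠ 0 := sub_ne_zero.2 hx.2.ne'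
      exact ((continuousAt_id.rpow_const (Or.inl hx.1.ne')).mul
        ((continuousAt_const.sub continuousAt_id).rpow_const (Or.inl h1x))).continuousWithinAt
  rw [beta_eq_integral hs hu, beta_eq_integral ht hu, beta_eq_integral (by positivity) hu]
  convert integral_mul_le_Lp_mul_Lq_of_nonneg e
    (ae_restrict_of_forall_mem measurableSet_Ioo (f_nonneg a s))
    (ae_restrict_of_forall_mem measurableSet_Ioo (f_nonneg b t)) (f_memLp ha hs) (f_memLp hb ht)
    using 1
  · refine setIntegral_congr_fun measurableSet_Ioo fun x hx => ?_
    simp only [f]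
    rw [mul_mul_mul_comm, ← rpow_add hx.1, ← rpow_add (sub_pos.2 hx.2)]
    congr 2 <;> (rw [show b = 1 - a by linarith]; ring)
  · rw [one_div_one_div, one_div_one_div]
    congr 2 <;> exact setIntegral_congr_fun measurableSet_Ioo fun x hx =>
      (f_rpow ‹_› _ x hx).symm

theorem Gamma_add_quarter_div_Gamma_add_three_quarters_sq_le {s : ℝ} (hs : 0 < s) :
    (Gamma (s + 1 / 4) / Gamma (s + 3 / 4)) ^ 2 ≤ 1 / s := by
  have hlogconvex := beta_mul_add_mul_le_rpow_beta_mul_rpow_beta hs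
    (by linarith : 0 < s + 1 / 2) one_half_pos one_half_pos one_half_pos (add_halves 1)
  rw [show 1 / 2 * s + 1 / 2 * (s + 1 / 2) = s + 1 / 4 by ring] at hlogconvex
  have hmid : beta (s + 1 / 4) (1 / 2) ^ 2 ≤ beta s (1 / 2) * beta (s + 1 / 2) (1 / 2) := by
    calc beta (s + 1 / 4) (1 / 2) ^ 2
        ≤ (beta s (1 / 2) ^ (1 / 2 : ℝ) * beta (s + 1 / 2) (1 / 2) ^ (1 / 2 : ℝ)) ^ 2 :=
          pow_le_pow_left₀ (beta_pos (by linarith) one_half_pos).le hlogconvex 2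
      _ = beta s (1 / 2) * beta (s + 1 / 2) (1 / 2) := by
          rw [mul_pow, ← rpow_natCast, ← rpow_natCast,
            ← rpow_mul (beta_pos hs one_half_pos).le,
            ← rpow_mul (beta_pos (by linarith) one_half_pos).le]
          norm_num
  have hΓ : 0 < Gamma (1 / 2) := Gamma_pos_of_pos one_half_pos
  have hlhs : beta (s + 1 / 4) (1 / 2) ^ 2
      = (Gamma (s + 1 / 4) / Gamma (s + 3 / 4)) ^ 2 * Gamma (1 / 2) ^ 2 := by
    rw [beta, show s + 1 / 4 + 1 / 2 = s + 3 / 4 by ring]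
    ring
  have hrhs : beta s (1 / 2) * beta (s + 1 / 2) (1 / 2) = 1 / s * Gamma (1 / 2) ^ 2 := by
    rw [beta, beta, show s + 1 / 2 + 1 / 2 = s + 1 by ring, Gamma_add_one hs.ne']
    field_simp
  rw [hlhs, hrhs] at hmid
  exact le_of_mul_le_mul_right hmid (by positivity)

lemma pos_of_hasDerivAt_neg_of_tendsto_zero {f f' : ℝ → ℝ} {a x : ℝ}
    (hf : ∀ y ∈ Ioi a, HasDerivAt f (f' y) y) (hf' : ∀ y ∈ Ioi a, f' y < 0)
    (hlim : Tendsto f atTop (𝓝 0)) (hx : a < x) : 0 < f x := by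
  have hanti : StrictAntiOn f (Ioi a) := by
    refine strictAntiOn_of_hasDerivWithinAt_neg (f' := f') (convex_Ioi a)
      (fun y hy => (hf y hy).continuousAt.continuousWithinAt) (fun y hy => ?_) ?_
    · rw [interior_Ioi] at hy ⊢
      exact (hf y hy).hasDerivWithinAt
    · simpa only [interior_Ioi] using hf'
  have hxa : x + 1 ∈ Ioi a := by simp only [mem_Ioi]; linarith
  calc 0 ≤ f (x + 1) :=
        le_of_tendsto hlim (eventually_ge_atTop (x + 1) |>.mono fun y hy =>
          hanti.antitoneOn hxa (lt_of_lt_of_le hxa hy) hy)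
    _ < f x := hanti hx hxa (by linarith)

/-- `compoundLog y = log ((1 + 1/y) ^ y)` for `y > 0`. -/
noncomputable def compoundLog (y : ℝ) : ℝ := y * (log (y + 1) - log y)

lemma div_rpow_self_eq_exp_compoundLog {y : ℝ} (hy : 0 < y) :
    ((y + 1) / y) ^ y = exp (compoundLog y) := by
  rw [rpow_def_of_pos (by positivity), log_div (by positivity) hy.ne', compoundLog, mul_comm]

lemma tendsto_compoundLog_atTop : Tendsto compoundLog atTop (𝓝 1) := by
  refine (tendsto_mul_log_one_add_div_atTop 1).congr' ?_
  filter_upwards [eventually_gt_atTop 0] with y hy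
  rw [compoundLog, ← log_div (by positivity) hy.ne', add_div, div_self hy.ne', add_comm]

lemma tendsto_log_add_one_sub_log_atTop :
    Tendsto (fun y => log (y + 1) - log y) atTop (𝓝 0) := by
  have := tendsto_compoundLog_atTop.mul tendsto_inv_atTop_zero
  rw [mul_zero] at this
  refine this.congr' ?_
  filter_upwards [eventually_gt_atTop 0] with y hy
  rw [compoundLog, mul_comm, ← mul_assoc, inv_mul_cancel₀ hy.ne', one_mul]

lemma hasDerivAt_compoundLog {y : ℝ} (hy : 0 < y) :
    HasDerivAt compoundLog (log (y + 1) - log y - 1 / (y + 1)) y := by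
  have h : HasDerivAt (fun z => z * (log (z + 1) - log z))
      (1 * (log (y + 1) - log y) + y * (1 / (y + 1) - 1 / y)) y :=
    (hasDerivAt_id' y).mul ((((hasDerivAt_id' y).add_const 1).log (by linarith)).sub
      ((hasDerivAt_id' y).log hy.ne'))
  refine h.congr_deriv ?_
  field_simp
  ring

lemma log_sub_log_le {u v : ℝ} (hu : 0 < u) (hv : 0 < v) : log u - log v ≤ u / v - 1 := by
  rw [← log_div hu.ne' hv.ne']
  exact log_le_sub_one_of_pos (div_pos hu hv)

theorem compoundLog_two_mul_add_one_lt {y : ℝ} (hy : 0 < y) :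
    compoundLog (2 * y + 1) < compoundLog y + (log (4 * y + 1) - log (4 * y)) := by
  let F' : ℝ → ℝ := fun z =>
    log (z + 1) - log z - 2 * (log (2 * z + 2) - log (2 * z + 1)) - 1 / (z * (4 * z + 1))
  have hF : ∀ z ∈ Ioi (0 : ℝ), HasDerivAt (fun z =>
      compoundLog z + (log (4 * z + 1) - log (4 * z)) - compoundLog (2 * z + 1)) (F' z) z := by
    intro z (hz : 0 < z)
    have h4 := (hasDerivAt_id' z).const_mul 4
    refine (((hasDerivAt_compoundLog hz).add (((h4.add_const 1).log (by positivity)).sub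
      (h4.log (by positivity)))).sub ((hasDerivAt_compoundLog (by positivity)).comp z
      (((hasDerivAt_id' z).const_mul 2).add_const 1))).congr_deriv ?_
    simp only [F']
    rw [show 2 * z + 1 + 1 = 2 * z + 2 by ring]
    field_simp
    ring
  have hF' : ∀ z ∈ Ioi (0 : ℝ), F' z < 0 := by
    intro z (hz : 0 < z)
    have hlog : log (z + 1) - log z - 2 * (log (2 * z + 2) - log (2 * z + 1))
        ≤ 1 / (4 * z * (z + 1)) :=
      calc _ = log ((z + 1) * (2 * z + 1) ^ 2) - log (z * (2 * z + 2) ^ 2) := by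
            rw [log_mul (x := z + 1) (by positivity) (by positivity),
              log_mul (x := z) (by positivity) (by positivity), log_pow, log_pow]
            push_cast
            ring
        _ ≤ _ := log_sub_log_le (by positivity) (by positivity)
        _ = _ := by field_simp; ring
    have hrat : 1 / (4 * z * (z + 1)) < 1 / (z * (4 * z + 1)) :=
      one_div_lt_one_div_of_lt (by positivity) (by nlinarith)
    simp only [F']
    linarith
  have hlim : Tendsto (fun z => compoundLog z + (log (4 * z + 1) - log (4 * z))
      - compoundLog (2 * z + 1)) atTop (𝓝 0) := by
    have h2 : Tendsto (fun z : ℝ => 2 * z + 1) atTop atTop :=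
      tendsto_atTop_add_const_right _ 1 (tendsto_id.const_mul_atTop two_pos)
    have h4 : Tendsto (fun z : ℝ => 4 * z) atTop atTop := tendsto_id.const_mul_atTop (by norm_num)
    simpa using (tendsto_compoundLog_atTop.add (tendsto_log_add_one_sub_log_atTop.comp h4)).sub
      (tendsto_compoundLog_atTop.comp h2)
  linarith [pos_of_hasDerivAt_neg_of_tendsto_zero hF hF' hlim hy]

theorem compoundLog_two_mul_lt {y : ℝ} (hy : 0 < y) :
    compoundLog (2 * y) < compoundLog y + (log (4 * y + 3) - log (4 * y + 2)) := by
  let F' : ℝ → ℝ := fun z =>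
    log (z + 1) - log z - 2 * (log (2 * z + 1) - log (2 * z)) + 1 / ((z + 1) * (4 * z + 3))
  have hF : ∀ z ∈ Ioi (0 : ℝ), HasDerivAt (fun z =>
      compoundLog z + (log (4 * z + 3) - log (4 * z + 2)) - compoundLog (2 * z)) (F' z) z := by
    intro z (hz : 0 < z)
    have h4 := (hasDerivAt_id' z).const_mul 4
    refine (((hasDerivAt_compoundLog hz).add (((h4.add_const 3).log (by positivity)).sub
      ((h4.add_const 2).log (by positivity)))).sub ((hasDerivAt_compoundLog (by positivity)).comp
      z ((hasDerivAt_id' z).const_mul 2))).congr_deriv ?_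
    simp only [F']
    field_simp
    ring
  have hF' : ∀ z ∈ Ioi (0 : ℝ), F' z < 0 := by
    intro z (hz : 0 < z)
    have hlog : log (z + 1) - log z - 2 * (log (2 * z + 1) - log (2 * z))
        ≤ -(1 / (2 * z + 1) ^ 2) :=
      calc _ = log ((z + 1) * (2 * z) ^ 2) - log (z * (2 * z + 1) ^ 2) := by
            rw [log_mul (x := z + 1) (by positivity) (by positivity),
              log_mul (x := z) (by positivity) (by positivity), log_pow, log_pow]
            push_cast
            ring
        _ ≤ _ := log_sub_log_le (by positivity) (by positivity)
        _ = _ := by field_simp; ring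
    have hrat : 1 / ((z + 1) * (4 * z + 3)) < 1 / (2 * z + 1) ^ 2 :=
      one_div_lt_one_div_of_lt (by positivity) (by nlinarith)
    simp only [F']
    linarith
  have hlim : Tendsto (fun z => compoundLog z + (log (4 * z + 3) - log (4 * z + 2))
      - compoundLog (2 * z)) atTop (𝓝 0) := by
    have h2 : Tendsto (fun z : ℝ => 2 * z) atTop atTop := tendsto_id.const_mul_atTop two_pos
    have h4 : Tendsto (fun z : ℝ => 4 * z + 2) atTop atTop :=
      tendsto_atTop_add_const_right _ 2 (tendsto_id.const_mul_atTop (by norm_num))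
    have := (tendsto_compoundLog_atTop.add (tendsto_log_add_one_sub_log_atTop.comp h4)).sub
      (tendsto_compoundLog_atTop.comp h2)
    norm_num [Function.comp_def, add_assoc] at this
    exact this
  linarith [pos_of_hasDerivAt_neg_of_tendsto_zero hF hF' hlim hy]

theorem two_mul_add_two_div_rpow_lt {y : ℝ} (hy : 0 < y) :
    ((2 * y + 2) / (2 * y + 1)) ^ (2 * y + 1)
      < ((y + 1) / y) ^ y * ((4 * y + 1) / (4 * y)) := by
  rw [show 2 * y + 2 = 2 * y + 1 + 1 by ring, div_rpow_self_eq_exp_compoundLog (by positivity),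
    div_rpow_self_eq_exp_compoundLog hy, ← exp_log (by positivity : 0 < (4 * y + 1) / (4 * y)),
    ← exp_add, exp_lt_exp, log_div (by positivity) (by positivity)]
  exact compoundLog_two_mul_add_one_lt hy

theorem two_mul_add_one_div_rpow_lt {y : ℝ} (hy : 0 < y) :
    ((2 * y + 1) / (2 * y)) ^ (2 * y) < ((y + 1) / y) ^ y * ((4 * y + 3) / (4 * y + 2)) := by
  rw [div_rpow_self_eq_exp_compoundLog (by positivity), div_rpow_self_eq_exp_compoundLog hy,
    ← exp_log (by positivity : 0 < (4 * y + 3) / (4 * y + 2)), ← exp_add, exp_lt_exp,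
    log_div (by positivity) (by positivity)]
  exact compoundLog_two_mul_lt hy

theorem isoperimetric_constant_lt_entropy_power_of_one_lt {α : ℝ} (hα : 1 < α) :
    2 * π / (α - 1) * (2 * α / (α + 1)) ^ ((α + 1) / (α - 1)) *
      (Gamma ((α + 1) / (2 * (α - 1))) / Gamma (α / (α - 1))) ^ 2
      < 2 * π * α ^ (1 / (α - 1)) := by
  have hα1 : α - 1 ≠ 0 := by linarith
  have hα2 : α + 1 ≠ 0 := by linarith
  set β := 1 / (α - 1) with hβ
  have hβpos : 0 < β := one_div_pos.2 (by linarith)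
  have e1 : 2 * π / (α - 1) = 2 * π * β := by rw [hβ]; field_simp
  have e2 : 2 * α / (α + 1) = (2 * β + 2) / (2 * β + 1) := by
    rw [div_eq_div_iff hα2 (by positivity), hβ]
    field_simp
    ring
  have e3 : (α + 1) / (α - 1) = 2 * β + 1 := by rw [hβ]; field_simp; ring
  have e4 : (α + 1) / (2 * (α - 1)) = β + 1 / 4 + 1 / 4 := by rw [hβ]; field_simp; ring
  have e5 : α / (α - 1) = β + 1 / 4 + 3 / 4 := by rw [hβ]; field_simp; ring
  have e6 : α = (β + 1) / β := by rw [hβ]; field_simp; ring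
  rw [e1, e2, e3, e4, e5, e6]
  have hΓ := Gamma_add_quarter_div_Gamma_add_three_quarters_sq_le
    (by positivity : 0 < β + 1 / 4)
  calc 2 * π * β * ((2 * β + 2) / (2 * β + 1)) ^ (2 * β + 1) *
        (Gamma (β + 1 / 4 + 1 / 4) / Gamma (β + 1 / 4 + 3 / 4)) ^ 2
      ≤ 2 * π * β * ((2 * β + 2) / (2 * β + 1)) ^ (2 * β + 1) * (1 / (β + 1 / 4)) := by
        gcongr
    _ < 2 * π * β * (((β + 1) / β) ^ β * ((4 * β + 1) / (4 * β))) * (1 / (β + 1 / 4)) := by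
        gcongr
        exact two_mul_add_two_div_rpow_lt hβpos
    _ = 2 * π * ((β + 1) / β) ^ β := by field_simp

theorem isoperimetric_constant_lt_entropy_power_of_lt_one {α : ℝ} (hα : 0 < α)
    (hα1 : α < 1) :
    4 * π * α / (1 - α ^ 2) * ((α + 1) / (2 * α)) ^ (2 * α / (1 - α)) *
      (Gamma (α / (1 - α)) / Gamma ((α + 1) / (2 * (1 - α)))) ^ 2
      < 2 * π * α ^ (1 / (α - 1)) := by
  have hα1' : 1 - α ≠ 0 := by linarith
  set γ := α / (1 - α) with hγ
  have hγpos : 0 < γ := div_pos hα (by linarith)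
  have e1 : 4 * π * α / (1 - α ^ 2) = 4 * π * γ * (γ + 1) / (2 * γ + 1) := by
    rw [div_eq_div_iff (by nlinarith) (by positivity), hγ]
    field_simp
    ring
  have e2 : (α + 1) / (2 * α) = (2 * γ + 1) / (2 * γ) := by
    rw [div_eq_div_iff (by positivity) (by positivity), hγ]
    field_simp
    ring
  have e3 : 2 * α / (1 - α) = 2 * γ := by rw [hγ]; ring
  have e4 : (α + 1) / (2 * (1 - α)) = γ + 1 / 2 := by rw [hγ]; field_simp; ring
  have e5 : 1 / (α - 1) = -(γ + 1) := by
    rw [hγ, div_add_one hα1', div_eq_iff (by linarith)]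
    field_simp
    ring
  have e6 : α ^ (-(γ + 1)) = ((γ + 1) / γ) ^ (γ + 1) := by
    rw [rpow_neg hα.le, ← inv_rpow hα.le]
    congr 1
    rw [hγ]
    field_simp
    ring
  rw [e1, e2, e3, e4, e5, e6]
  have hΓ :
      (Gamma γ / Gamma (γ + 1 / 2)) ^ 2 ≤ (γ + 1 / 2) ^ 2 / (γ ^ 2 * (γ + 3 / 4)) := by
    have h := Gamma_add_quarter_div_Gamma_add_three_quarters_sq_le
      (by positivity : 0 < γ + 3 / 4)
    rw [show γ + 3 / 4 + 1 / 4 = γ + 1 by ring, show γ + 3 / 4 + 3 / 4 = γ + 1 / 2 + 1 by ring,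
      Gamma_add_one hγpos.ne', Gamma_add_one (by positivity)] at h
    calc (Gamma γ / Gamma (γ + 1 / 2)) ^ 2
        = ((γ + 1 / 2) / γ) ^ 2 * (γ * Gamma γ / ((γ + 1 / 2) * Gamma (γ + 1 / 2))) ^ 2 := by
          field_simp
      _ ≤ ((γ + 1 / 2) / γ) ^ 2 * (1 / (γ + 3 / 4)) := by gcongr
      _ = _ := by field_simp
  calc 4 * π * γ * (γ + 1) / (2 * γ + 1) * ((2 * γ + 1) / (2 * γ)) ^ (2 * γ) *
        (Gamma γ / Gamma (γ + 1 / 2)) ^ 2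
      ≤ 4 * π * γ * (γ + 1) / (2 * γ + 1) * ((2 * γ + 1) / (2 * γ)) ^ (2 * γ) *
        ((γ + 1 / 2) ^ 2 / (γ ^ 2 * (γ + 3 / 4))) := by gcongr
    _ < 4 * π * γ * (γ + 1) / (2 * γ + 1) *
        (((γ + 1) / γ) ^ γ * ((4 * γ + 3) / (4 * γ + 2))) *
        ((γ + 1 / 2) ^ 2 / (γ ^ 2 * (γ + 3 / 4))) := by
        gcongr
        exact two_mul_add_one_div_rpow_lt hγpos
    _ = 2 * π * (((γ + 1) / γ) ^ γ * ((γ + 1) / γ)) := by field_simp; ring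
    _ = 2 * π * ((γ + 1) / γ) ^ (γ + 1) := by rw [rpow_add_one (by positivity)]

theorem gaussian_entropy_power_exceeds_optimal_isoperimetric_constant
    (α : ℝ) (hα : 0 < α) (hne : α ≠ 1) :
    2 * π * α ^ (1 / (α - 1)) >
      if 1 < α then
        2 * π / (α - 1) * (2 * α / (α + 1)) ^ ((α + 1) / (α - 1)) *
          (Gamma ((α + 1) / (2 * (α - 1))) / Gamma (α / (α - 1))) ^ 2
      else
        4 * π * α / (1 - α ^ 2) * ((α + 1) / (2 * α)) ^ (2 * α / (1 - α)) *
          (Gamma (α / (1 - α)) / Gamma ((α + 1) / (2 * (1 - α)))) ^ 2 := by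
  split_ifs with h
  · exact isoperimetric_constant_lt_entropy_power_of_one_lt h
  · exact isoperimetric_constant_lt_entropy_power_of_lt_one hα (lt_of_le_of_ne (not_lt.1 h) hne)
end
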